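/- The family of Lascoux atoms {L_γ : γ a weak composition with n parts} is linearly independent over ℤ[β]: if c_γ ∈ ℤ[β] are almost all zero and Σ_γ c_γ L_γ = 0 in ℤ[β][x_1,…,x_n], then c_γ = 0 for every γ. -/

import Mathlib

open Finset MvPolynomial

/-- The inversion-triple condition on anchor values `b, a, c`:
`b > c ≥ a` or `c ≥ a > b`. -/
def InvTriple (b a c : ℕ) : Prop := (c < b ∧ a ≤ c) ∨ (a ≤ c ∧ b < a)

/-- A set-valued skyline filling of shape `γ` (row `i : Fin n` is the `(i+1)`-st row) with
basement `b_i = i`: box `(i, j)` for `1 ≤ j ≤ γ i` carries a nonempty finite set of positive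
integers, box `(i, 0)` is the basement `{i + 1}`, and boxes outside the shape are empty. -/
structure SVFilling (n : ℕ) (γ : Fin n → ℕ) where
  box : Fin n → ℕ → Finset ℕ
  basement : ∀ i : Fin n, box i 0 = {(i : ℕ) + 1}
  nonempty : ∀ i : Fin n, ∀ j : ℕ, 1 ≤ j → j ≤ γ i → (box i j).Nonempty
  pos : ∀ i : Fin n, ∀ j : ℕ, ∀ e ∈ box i j, 1 ≤ e
  outside : ∀ i : Fin n, ∀ j : ℕ, γ i < j → box i j = ∅

namespace SVFilling

variable {n : ℕ} {γ : Fin n → ℕ}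

/-- The anchor (= largest) entry of box `(i, j)`. -/
def anchor (F : SVFilling n γ) (i : Fin n) (j : ℕ) : ℕ := (F.box i j).sup id

/-- Semistandardness conditions (S1)-(S4). -/
def IsSemistandard (F : SVFilling n γ) : Prop :=
  (∀ j : ℕ, 1 ≤ j → ∀ i i' : Fin n, i ≠ i' → ∀ e : ℕ, e ∈ F.box i j → e ∉ F.box i' j) ∧
  (∀ i : Fin n, ∀ j : ℕ, 1 ≤ j → j ≤ γ i →
      ∀ a ∈ F.box i (j - 1), ∀ b ∈ F.box i j, b ≤ a) ∧
  (∀ i i' : Fin n, i < i' →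
      (γ i' ≤ γ i → ∀ m : ℕ, m + 1 ≤ γ i' →
        InvTriple (F.anchor i' (m + 1)) (F.anchor i (m + 1)) (F.anchor i m)) ∧
      (γ i < γ i' → ∀ m : ℕ, m ≤ γ i → m + 1 ≤ γ i' →
        InvTriple (F.anchor i m) (F.anchor i' (m + 1)) (F.anchor i' m))) ∧
  (∀ i : Fin n, ∀ j : ℕ, 1 ≤ j → j ≤ γ i → ∀ e ∈ F.box i j, e ≠ F.anchor i j →
      ∀ i' : Fin n, i' < i → j ≤ γ i' →
        ¬ (e < F.anchor i' j ∧ (j = γ i' ∨ F.anchor i' (j + 1) ≤ e)))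

/-- `F.content v` is the number of (non-basement) boxes of `F` containing the value `v`. -/
def content (F : SVFilling n γ) (v : ℕ) : ℕ :=
  ∑ i : Fin n, ((Finset.Icc 1 (γ i)).filter (fun j => v ∈ F.box i j)).card

/-- `|F|`, the total number of entries of `F` (with multiplicity over boxes). -/
def size (F : SVFilling n γ) : ℕ :=
  ∑ i : Fin n, ∑ j ∈ Finset.Icc 1 (γ i), (F.box i j).card

/-- `F` has content the weak composition `δ` with `n` parts. -/
def HasContent (F : SVFilling n γ) (δ : Fin n → ℕ) : Prop :=
  (∀ i : Fin n, F.content ((i : ℕ) + 1) = δ i) ∧ ∀ v : ℕ, n < v → F.content v = 0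

end SVFilling

/-- The (combinatorial) Lascoux atom `L_γ ∈ ℤ[β][x_1, …, x_n]`, where `β` is the polynomial
variable of `ℤ[β] = Polynomial ℤ`. -/
noncomputable def Lascoux (n : ℕ) (γ : Fin n → ℕ) : MvPolynomial (Fin n) (Polynomial ℤ) :=
  ∑ᶠ F : {F : SVFilling n γ // F.IsSemistandard},
    MvPolynomial.monomial
      (Finsupp.equivFunOnFinite.symm
        (fun i : Fin n => (F : SVFilling n γ).content ((i : ℕ) + 1)))
      (Polynomial.X ^ ((F : SVFilling n γ).size - ∑ i, γ i))

/-!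
Only fillings with exactly one entry per box contribute to the `β⁰` part of `L_γ`. In such
a filling every entry of row `i` is at most `i + 1`, so its content `δ` satisfies
`∑ (i + 1) δᵢ ≤ ∑ (i + 1) γᵢ`, with equality only for the filling whose row `i` is
filled with `i + 1`. Hence the `β⁰` part of `L_γ` is `x^γ` plus monomials of strictly
smaller weight, and a vanishing combination `∑ c_γ L_γ` is ruled out by looking at the
coefficient of `β^k x^γ`, where `k` is the least `β`-adic order of the `c_γ` and `γ` has
maximal weight among those `c_γ` whose `β^k`-coefficient is nonzero.
-/

open Polynomial in
theorem Polynomial.coeff_mul_of_le_natTrailingDegree {R : Type*} [Semiring R] {p q : R[X]}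
    {k : ℕ} (hk : k ≤ p.natTrailingDegree) : (p * q).coeff k = p.coeff k * q.coeff 0 := by
  rw [coeff_mul, Finset.sum_eq_single (k, 0)]
  · rintro ⟨a, b⟩ hab hne
    rw [HasAntidiagonal.mem_antidiagonal] at hab
    rw [coeff_eq_zero_of_lt_natTrailingDegree (by grind), zero_mul]
  · simp

open Polynomial in
theorem linearIndependent_of_coeff_triangular {ι σ α R : Type*} [CommRing R] [LinearOrder α]
    (L : ι → MvPolynomial σ R[X]) (m : ι → σ →₀ ℕ) (w : ι → α)
    (hself : ∀ γ, ((L γ).coeff (m γ)).coeff 0 = 1)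
    (hlower : ∀ γ δ, γ ≠ δ → w γ ≤ w δ → ((L γ).coeff (m δ)).coeff 0 = 0) :
    LinearIndependent R[X] L := by
  classical
  refine linearIndependent_iff.2 fun c hc => ?_
  by_contra hc0
  have hsupp : c.support.Nonempty := Finsupp.support_nonempty_iff.2 hc0
  obtain ⟨γ₀, hγ₀, hk⟩ :=
    c.support.exists_min_image (fun γ => (c γ).natTrailingDegree) hsupp
  set k := (c γ₀).natTrailingDegree
  set S := c.support.filter fun γ => (c γ).coeff k ≠ 0
  have hγ₀S : γ₀ ∈ S :=
    mem_filter.2 ⟨hγ₀, mt trailingCoeff_eq_zero.1 (Finsupp.mem_support_iff.1 hγ₀)⟩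
  obtain ⟨γ, hγS, hmax⟩ := S.exists_max_image w ⟨γ₀, hγ₀S⟩
  obtain ⟨hγ, hcγ⟩ := mem_filter.1 hγS
  have hcoeff : ((Finsupp.linearCombination R[X] L c).coeff (m γ)).coeff k = (c γ).coeff k := by
    rw [Finsupp.linearCombination_apply, Finsupp.sum, MvPolynomial.coeff_sum, finsetSum_coeff,
      sum_eq_single γ]
    · rw [MvPolynomial.coeff_smul, smul_eq_mul,
        coeff_mul_of_le_natTrailingDegree (hk γ hγ), hself, mul_one]
    · intro δ hδ hne
      rw [MvPolynomial.coeff_smul, smul_eq_mul, coeff_mul_of_le_natTrailingDegree (hk δ hδ)]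
      by_cases hδk : (c δ).coeff k = 0
      · rw [hδk, zero_mul]
      · rw [hlower δ γ hne (hmax δ (mem_filter.2 ⟨hδ, hδk⟩)), mul_zero]
    · exact fun h => absurd hγ h
  rw [hc] at hcoeff
  exact hcγ (by simpa using hcoeff.symm)

theorem Fin.sum_ite_succ_mem {M : Type*} [AddCommMonoid M] {n : ℕ} {s : Finset ℕ}
    (hs : ∀ e ∈ s, 1 ≤ e ∧ e ≤ n) (f : ℕ → M) :
    ∑ i : Fin n, (if (i : ℕ) + 1 ∈ s then f ((i : ℕ) + 1) else 0) = ∑ e ∈ s, f e := by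
  classical
  have hsub : s ⊆ univ.image fun i : Fin n => (i : ℕ) + 1 := fun e he =>
    mem_image.2 ⟨⟨e - 1, by grind⟩, mem_univ _, by grind⟩
  have h := sum_ite_mem (univ.image fun i : Fin n => (i : ℕ) + 1) s f
  rwa [inter_eq_right.2 hsub, sum_image fun a _ b _ h => by grind] at h

def weight {n : ℕ} (δ : Fin n → ℕ) : ℕ := ∑ i : Fin n, ((i : ℕ) + 1) * δ i

namespace SVFilling

variable {n : ℕ} {γ : Fin n → ℕ}

def contentVec (F : SVFilling n γ) : Fin n → ℕ := fun i => F.content ((i : ℕ) + 1)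

theorem box_injective : Function.Injective (box : SVFilling n γ → _) := by
  rintro ⟨⟩ ⟨⟩ h
  simpa using h

theorem le_of_mem_box {F : SVFilling n γ} (hF : F.IsSemistandard) {i : Fin n} :
    ∀ {j e : ℕ}, e ∈ F.box i j → e ≤ (i : ℕ) + 1
  | 0, e, he => by simp_all [F.basement]
  | j + 1, e, he => by
    have hj : j + 1 ≤ γ i := by
      by_contra! h
      simp [F.outside i _ h] at he
    obtain ⟨a, ha⟩ : (F.box i j).Nonempty := by
      rcases j with _ | j
      · simp [F.basement]
      · exact F.nonempty i _ (by omega) (by omega)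
    exact (hF.2.1 i (j + 1) (by omega) hj a ha e he).trans (le_of_mem_box hF ha)

theorem anchor_le {F : SVFilling n γ} (hF : F.IsSemistandard) (i : Fin n) (j : ℕ) :
    F.anchor i j ≤ (i : ℕ) + 1 :=
  Finset.sup_le fun _ he => le_of_mem_box hF he

instance : Finite {F : SVFilling n γ // F.IsSemistandard} := by
  classical
  let M := univ.sup γ
  let t := range (n + 1)
  refine Finite.of_injective (β := Fin n → Fin (M + 1) → Finset t)
    (fun F i j => (F.1.box i j).subtype (· ∈ t)) fun F G h => ?_
  refine Subtype.ext (box_injective (funext₂ fun i j => ?_))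
  rcases le_or_gt j (γ i) with hj | hj
  · have hjM : j < M + 1 := Nat.lt_succ_of_le (hj.trans (le_sup (mem_univ i)))
    have hFG := congrArg (Finset.map (Function.Embedding.subtype _)) (congrFun₂ h i ⟨j, hjM⟩)
    have ht : ∀ H : {F : SVFilling n γ // F.IsSemistandard}, ∀ e ∈ H.1.box i j, e ∈ t :=
      fun H e he => mem_range.2 (by have := le_of_mem_box H.2 he; omega)
    simpa only [subtype_map, filter_true_of_mem (ht F), filter_true_of_mem (ht G)] using hFG
  · rw [F.1.outside i j hj, G.1.outside i j hj]

theorem sum_mul_content {F : SVFilling n γ} (hF : F.IsSemistandard) (f : ℕ → ℕ) :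
    ∑ i : Fin n, f ((i : ℕ) + 1) * F.contentVec i
      = ∑ i : Fin n, ∑ j ∈ Icc 1 (γ i), ∑ e ∈ F.box i j, f e := by
  classical
  calc ∑ i : Fin n, f ((i : ℕ) + 1) * F.contentVec i
      = ∑ i : Fin n, ∑ i' : Fin n, ∑ j ∈ Icc 1 (γ i'),
          if (i : ℕ) + 1 ∈ F.box i' j then f ((i : ℕ) + 1) else 0 := by
        simp only [contentVec, content, mul_sum, card_filter, mul_ite, mul_one, mul_zero]
    _ = ∑ i' : Fin n, ∑ j ∈ Icc 1 (γ i'), ∑ i : Fin n,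
          if (i : ℕ) + 1 ∈ F.box i' j then f ((i : ℕ) + 1) else 0 := by
        rw [sum_comm]
        exact sum_congr rfl fun _ _ => sum_comm
    _ = _ := sum_congr rfl fun i' _ => sum_congr rfl fun j _ =>
        Fin.sum_ite_succ_mem (fun e he =>
          ⟨F.pos i' j e he, (le_of_mem_box hF he).trans i'.isLt⟩) f

theorem card_box_eq_one {F : SVFilling n γ} (hsize : F.size ≤ ∑ i, γ i) {i : Fin n} {j : ℕ}
    (hj : j ∈ Icc 1 (γ i)) : (F.box i j).card = 1 := by
  have hpos : ∀ i, ∀ j ∈ Icc 1 (γ i), 1 ≤ (F.box i j).card := fun i j hj =>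
    (F.nonempty i j (mem_Icc.1 hj).1 (mem_Icc.1 hj).2).card_pos
  have hrow :
      ∀ i ∈ univ, ∑ j ∈ Icc 1 (γ i), 1 ≤ ∑ j ∈ Icc 1 (γ i), (F.box i j).card :=
    fun i _ => sum_le_sum (hpos i)
  have htotal : ∑ i, ∑ j ∈ Icc 1 (γ i), 1 = F.size :=
    le_antisymm (sum_le_sum hrow) (by simpa using hsize)
  have hrow_eq := (sum_eq_sum_iff_of_le hrow).1 htotal i (mem_univ i)
  exact ((sum_eq_sum_iff_of_le (hpos i)).1 hrow_eq j hj).symm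

theorem box_eq_singleton_anchor {F : SVFilling n γ} (hsize : F.size ≤ ∑ i, γ i) {i : Fin n}
    {j : ℕ} (hj : j ∈ Icc 1 (γ i)) : F.box i j = {F.anchor i j} := by
  obtain ⟨a, ha⟩ := card_eq_one.1 (card_box_eq_one hsize hj)
  simp [anchor, ha]

theorem weight_content_eq_sum_anchor {F : SVFilling n γ} (hF : F.IsSemistandard)
    (hsize : F.size ≤ ∑ i, γ i) :
    weight F.contentVec = ∑ i : Fin n, ∑ j ∈ Icc 1 (γ i), F.anchor i j := by
  have h := sum_mul_content hF id
  simp only [id] at h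
  rw [weight, h]
  exact sum_congr rfl fun i _ => sum_congr rfl fun j hj => by
    simp [box_eq_singleton_anchor hsize hj]

theorem weight_eq_sum_succ :
    weight γ = ∑ i : Fin n, ∑ _j ∈ Icc 1 (γ i), ((i : ℕ) + 1) := by
  simp [weight, mul_comm]

def canonical (n : ℕ) (γ : Fin n → ℕ) : SVFilling n γ where
  box i j := if j ≤ γ i then {(i : ℕ) + 1} else ∅
  basement i := by simp
  nonempty i j _ h := by simp [h]
  pos i j e he := by split_ifs at he <;> simp_all
  outside i j h := if_neg (by omega)

theorem box_canonical {i : Fin n} {j : ℕ} (h : j ≤ γ i) :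
    (canonical n γ).box i j = {(i : ℕ) + 1} :=
  if_pos h

theorem mem_box_canonical {i : Fin n} {j e : ℕ} :
    e ∈ (canonical n γ).box i j ↔ j ≤ γ i ∧ e = (i : ℕ) + 1 := by
  by_cases h : j ≤ γ i
  · simp [box_canonical h, h]
  · simp [(canonical n γ).outside i j (not_le.1 h), h]

theorem anchor_canonical {i : Fin n} {j : ℕ} (h : j ≤ γ i) :
    (canonical n γ).anchor i j = (i : ℕ) + 1 := by
  simp [anchor, box_canonical h]

theorem eq_canonical {F : SVFilling n γ}
    (h : ∀ i : Fin n, ∀ j ∈ Icc 1 (γ i), F.box i j = {(i : ℕ) + 1}) :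
    F = canonical n γ := by
  refine box_injective (funext₂ fun i j => ?_)
  rcases Nat.eq_zero_or_pos j with rfl | hj
  · rw [F.basement, (canonical n γ).basement]
  rcases le_or_gt j (γ i) with hjγ | hjγ
  · rw [h i j (mem_Icc.2 ⟨hj, hjγ⟩), box_canonical hjγ]
  · rw [F.outside i j hjγ, (canonical n γ).outside i j hjγ]

theorem eq_canonical_of_weight_le {F : SVFilling n γ} (hF : F.IsSemistandard)
    (hsize : F.size ≤ ∑ i, γ i) (hw : weight γ ≤ weight F.contentVec) :
    F = canonical n γ := by
  have hrow : ∀ i ∈ univ,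
      ∑ j ∈ Icc 1 (γ i), F.anchor i j ≤ ∑ _j ∈ Icc 1 (γ i), ((i : ℕ) + 1) :=
    fun i _ => sum_le_sum fun j _ => anchor_le hF i j
  have htotal := le_antisymm (sum_le_sum hrow)
    (by rwa [← weight_eq_sum_succ, ← weight_content_eq_sum_anchor hF hsize])
  refine eq_canonical fun i j hj => ?_
  have hanchor := (sum_eq_sum_iff_of_le fun j _ => anchor_le hF i j).1
    ((sum_eq_sum_iff_of_le hrow).1 htotal i (mem_univ i)) j hj
  rw [box_eq_singleton_anchor hsize hj, hanchor]

theorem isSemistandard_canonical : (canonical n γ).IsSemistandard := by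
  refine ⟨?_, ?_, fun i i' hii' => ⟨?_, ?_⟩, ?_⟩
  · intro j _ i i' hne e he he'
    rw [mem_box_canonical] at he he'
    exact hne (Fin.ext (by omega))
  · intro i j _ _ a ha b hb
    rw [mem_box_canonical] at ha hb
    omega
  · intro _ m hm
    rw [anchor_canonical hm, anchor_canonical (by omega), anchor_canonical (by omega)]
    exact Or.inl ⟨Nat.succ_lt_succ hii', le_rfl⟩
  · intro _ m hm hm'
    rw [anchor_canonical hm, anchor_canonical hm', anchor_canonical (by omega)]
    exact Or.inr ⟨le_rfl, Nat.succ_lt_succ hii'⟩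
  · intro i j _ h e he hne
    exact absurd ((mem_box_canonical.1 he).2.trans (anchor_canonical h).symm) hne

theorem size_canonical : (canonical n γ).size = ∑ i, γ i :=
  sum_congr rfl fun i _ => by
    rw [sum_congr rfl fun j hj => by rw [box_canonical (mem_Icc.1 hj).2]]
    simp

theorem contentVec_canonical : (canonical n γ).contentVec = γ := by
  ext i
  rw [contentVec, content, sum_eq_single i]
  · rw [filter_true_of_mem fun j hj => mem_box_canonical.2 ⟨(mem_Icc.1 hj).2, rfl⟩]
    simp
  · intro i' _ hne
    simp [mem_box_canonical, Fin.val_inj, hne.symm]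
  · simp

end SVFilling

open SVFilling

theorem Lascoux_coeff_coeff_zero (n : ℕ) (γ δ : Fin n → ℕ) :
    ((Lascoux n γ).coeff (Finsupp.equivFunOnFinite.symm δ)).coeff 0
      = Nat.card {F : {F : SVFilling n γ // F.IsSemistandard} //
          F.1.contentVec = δ ∧ F.1.size ≤ ∑ i, γ i} := by
  classical
  have := Fintype.ofFinite {F : SVFilling n γ // F.IsSemistandard}
  rw [Lascoux, finsum_eq_sum_of_fintype, MvPolynomial.coeff_sum, Polynomial.finsetSum_coeff,
    Nat.card_eq_fintype_card, Fintype.card_subtype, ← sum_boole]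
  refine sum_congr rfl fun F _ => ?_
  simp only [MvPolynomial.coeff_monomial, EmbeddingLike.apply_eq_iff_eq]
  change (if F.1.contentVec = δ then _ else (0 : Polynomial ℤ)).coeff 0 = _
  by_cases hδ : F.1.contentVec = δ
  · simp [hδ, Polynomial.coeff_X_pow, eq_comm (a := 0), Nat.sub_eq_zero_iff_le]
  · simp [hδ]

theorem Lascoux_coeff_coeff_zero_self (n : ℕ) (γ : Fin n → ℕ) :
    ((Lascoux n γ).coeff (Finsupp.equivFunOnFinite.symm γ)).coeff 0 = 1 := by
  rw [Lascoux_coeff_coeff_zero, Nat.card_eq_one_iff_exists.2, Nat.cast_one]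
  refine ⟨⟨⟨canonical n γ, isSemistandard_canonical⟩,
    contentVec_canonical, size_canonical.le⟩, ?_⟩
  rintro ⟨⟨F, hF⟩, hcontent, hsize⟩
  exact Subtype.ext (Subtype.ext (eq_canonical_of_weight_le hF hsize (by rw [hcontent])))

theorem Lascoux_coeff_coeff_zero_eq_zero {n : ℕ} {γ δ : Fin n → ℕ} (hne : γ ≠ δ)
    (hw : weight γ ≤ weight δ) :
    ((Lascoux n γ).coeff (Finsupp.equivFunOnFinite.symm δ)).coeff 0 = 0 := by
  rw [Lascoux_coeff_coeff_zero, Nat.card_eq_zero.2 (Or.inl ⟨?_⟩), Nat.cast_zero]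
  rintro ⟨⟨F, hF⟩, rfl, hsize⟩
  obtain rfl := eq_canonical_of_weight_le hF hsize hw
  exact hne contentVec_canonical.symm

theorem linearIndependent_Lascoux (n : ℕ) : LinearIndependent (Polynomial ℤ) (Lascoux n) :=
  linearIndependent_of_coeff_triangular _ _ weight (Lascoux_coeff_coeff_zero_self n)
    fun _ _ => Lascoux_coeff_coeff_zero_eq_zero

theorem stmt5_general (n : ℕ) :
    ∀ c : (Fin n → ℕ) →₀ Polynomial ℤ,
      (c.sum fun γ p => MvPolynomial.C p * Lascoux n γ) = 0 → c = 0 := by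
  intro c hc
  refine linearIndependent_iff.1 (linearIndependent_Lascoux n) c ?_
  simpa only [Finsupp.linearCombination_apply, MvPolynomial.smul_eq_C_mul] using hc

/-- The Lascoux atoms `{L_γ}`, indexed by weak compositions `γ` with `n`
parts, are linearly independent over `ℤ[β]`: any finitely supported `ℤ[β]`-linear
combination of them that vanishes has all coefficients zero. -/
theorem stmt5 (n : ℕ) (hn : 1 ≤ n) :
    ∀ c : (Fin n → ℕ) →₀ Polynomial ℤ,
      (c.sum fun γ p => MvPolynomial.C p * Lascoux n γ) = 0 → c = 0 :=
  stmt5_general n
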